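/- arXiv:math/0007133 — 2 statements merged into one kernel-verified Lean document; each statement's English description precedes it below -/
import Mathlib

section
/- Set r_s = 2 / ( |b|·(A − B) + √( |b|²·(A − B)² + 4·(B² + (A·B − B²)·Re b) ) ), assuming |b|²·(A − B)² + 4·(B² + (A·B − B²)·Re b) ≥ 0. If f belongs to S*(A,B,b), then Re( z·f′(z)/f(z) ) > 0 for every z ∈ D \ {0} with |z| < r_s. (Theorem 2.1: radius of starlikeness of the class S*(A,B,b).) -/
/-!
Write `w = ω z` and `r = ‖z‖`. By the Schwarz lemma `‖w‖ ≤ r`, and the defining relation gives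
`z f'(z)/f(z) = 1 + (A - B) b u` with `u = w / (1 + B w)`. The Möbius map `w ↦ w / (1 + B w)`
sends the disc `‖w‖ ≤ r` into the disc with centre `-B r² / (1 - B² r²)` and radius
`r / (1 - B² r²)`, so `(1 - B² r²) Re (b u) ≥ -‖b‖ r - B r² Re b`. Hence
`(1 - B² r²) Re (z f'/f) ≥ 1 - p r - q r²` with `p = ‖b‖ (A - B)`, `q = B² + (A B - B²) Re b`,
and `r_s` is exactly the positive root of `q r² + p r = 1`.
-/

open Complex Metric Set

lemma one_add_ofReal_mul_ne_zero {B : ℝ} {w : ℂ} (h : |B| * ‖w‖ < 1) : 1 + (B : ℂ) * w ≠ 0 := by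
  intro h0
  have hBw : (B : ℂ) * w = -1 := by linear_combination h0
  have : ‖(B : ℂ) * w‖ = |B| * ‖w‖ := by rw [norm_mul, norm_real, Real.norm_eq_abs]
  rw [hBw, norm_neg, norm_one] at this
  linarith

lemma sq_mul_sq_lt_one {B r : ℝ} (hr : 0 ≤ r) (hBr : |B| * r < 1) : B ^ 2 * r ^ 2 < 1 := by
  rw [← sq_abs B, ← mul_pow]
  exact pow_lt_one₀ (by positivity) hBr two_ne_zero

lemma eq_one_add_mul_div_of_one_add_inv_mul_sub_one_eq {K : Type*} [Field K] {A B b w X : K}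
    (hb : b ≠ 0) (hBw : 1 + B * w ≠ 0)
    (h : 1 + (1 / b) * (X - 1) = (1 + A * w) / (1 + B * w)) :
    X = 1 + (A - B) * b * (w / (1 + B * w)) := by
  have hX : X - 1 = b * ((1 + A * w) / (1 + B * w) - 1) := by
    rw [← h]; field_simp; ring
  rw [← sub_eq_iff_eq_add', hX, div_sub_one hBw]
  ring

lemma norm_add_ofReal_le_mul_norm_one_add {w : ℂ} {B r : ℝ} (hw : ‖w‖ ≤ r)
    (hBr : B ^ 2 * r ^ 2 ≤ 1) :
    ‖w + ((B * r ^ 2 : ℝ) : ℂ)‖ ≤ r * ‖1 + (B : ℂ) * w‖ := by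
  have hr : 0 ≤ r := (norm_nonneg w).trans hw
  have hw2 : normSq w ≤ r ^ 2 := by
    rw [← Complex.sq_norm]; exact pow_le_pow_left₀ (norm_nonneg w) hw 2
  rw [← pow_le_pow_iff_left₀ (norm_nonneg _) (by positivity) two_ne_zero, mul_pow,
    Complex.sq_norm, Complex.sq_norm]
  simp only [normSq_apply] at hw2 ⊢
  simp only [add_re, add_im, ofReal_re, ofReal_im, one_re, one_im, re_ofReal_mul, im_ofReal_mul]
  -- the difference of the two sides is `(r² - ‖w‖²) (1 - B² r²)`
  nlinarith [mul_nonneg (sub_nonneg.2 hBr) (sub_nonneg.2 hw2)]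

lemma norm_mul_div_one_add_add_ofReal_le {w : ℂ} {B r : ℝ} (hw : ‖w‖ ≤ r) (hBr : |B| * r < 1) :
    ‖((1 - B ^ 2 * r ^ 2 : ℝ) : ℂ) * (w / (1 + B * w)) + ((B * r ^ 2 : ℝ) : ℂ)‖ ≤ r := by
  have hBw : 1 + (B : ℂ) * w ≠ 0 :=
    one_add_ofReal_mul_ne_zero (lt_of_le_of_lt (by gcongr) hBr)
  have hBr2 := sq_mul_sq_lt_one ((norm_nonneg w).trans hw) hBr
  have hcentre : ((1 - B ^ 2 * r ^ 2 : ℝ) : ℂ) * (w / (1 + B * w)) + ((B * r ^ 2 : ℝ) : ℂ)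
      = (w + ((B * r ^ 2 : ℝ) : ℂ)) / (1 + B * w) := by
    push_cast
    field_simp
    ring
  rw [hcentre, norm_div, div_le_iff₀ (norm_pos_iff.2 hBw)]
  exact norm_add_ofReal_le_mul_norm_one_add hw hBr2.le

lemma re_one_add_mul_div_one_add_mul_pos {A B r : ℝ} {b w : ℂ} (hBA : B < A) (hw : ‖w‖ ≤ r)
    (hBr : |B| * r < 1)
    (hqp : (B ^ 2 + (A * B - B ^ 2) * b.re) * r ^ 2 + ‖b‖ * (A - B) * r < 1) :
    0 < (1 + ((A : ℂ) - B) * b * (w / (1 + B * w))).re := by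
  set u := w / (1 + B * w)
  have hr : 0 ≤ r := (norm_nonneg w).trans hw
  have hD : 0 < 1 - B ^ 2 * r ^ 2 := sub_pos.2 (sq_mul_sq_lt_one hr hBr)
  have hbu : -(‖b‖ * r) ≤ (1 - B ^ 2 * r ^ 2) * (b * u).re + B * r ^ 2 * b.re := by
    set v := ((1 - B ^ 2 * r ^ 2 : ℝ) : ℂ) * u + ((B * r ^ 2 : ℝ) : ℂ)
    calc -(‖b‖ * r) ≤ -‖b * v‖ := by
          rw [norm_mul]; gcongr; exact norm_mul_div_one_add_add_ofReal_le hw hBr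
      _ ≤ (b * v).re := neg_le.1 (by simpa using re_le_norm (-(b * v)))
      _ = (1 - B ^ 2 * r ^ 2) * (b * u).re + B * r ^ 2 * b.re := by
          rw [mul_add, add_re, mul_left_comm, re_ofReal_mul, mul_comm b (ofReal _), re_ofReal_mul]
  have hre : (1 + ((A : ℂ) - B) * b * u).re = 1 + (A - B) * (b * u).re := by
    rw [add_re, one_re, mul_assoc, ← ofReal_sub, re_ofReal_mul]
  rw [hre]
  refine pos_of_mul_pos_right (a := 1 - B ^ 2 * r ^ 2) ?_ hD.le
  nlinarith [mul_le_mul_of_nonneg_left hbu (sub_nonneg.2 hBA.le)]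

lemma mul_sq_add_mul_lt_one {p q r : ℝ} (hp : 0 < p) (hdisc : 0 ≤ p ^ 2 + 4 * q) (hr : 0 ≤ r)
    (hrs : r < 2 / (p + √(p ^ 2 + 4 * q))) : q * r ^ 2 + p * r < 1 := by
  have hs := Real.sq_sqrt hdisc
  have hs0 := Real.sqrt_nonneg (p ^ 2 + 4 * q)
  rw [lt_div_iff₀ (by positivity)] at hrs
  nlinarith [mul_nonneg hr hs0, mul_nonneg hr hp.le, sq_nonneg (r * √(p ^ 2 + 4 * q))]

theorem stmt2_general (A B : ℝ) (hB : -1 ≤ B) (hBA : B < A) (hA : A ≤ 1)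
    (b : ℂ) (hb : b ≠ 0) (f : ℂ → ℂ)
    (ω : ℂ → ℂ) (hω : AnalyticOn ℂ ω (ball 0 1))
    (hω0 : ω 0 = 0) (hωlt : ∀ z ∈ ball (0:ℂ) 1, ‖ω z‖ < 1)
    (hmem : ∀ z ∈ ball (0:ℂ) 1, z ≠ 0 →
      1 + (1/b) * (z * deriv f z / f z - 1) = (1 + (A:ℂ) * ω z) / (1 + (B:ℂ) * ω z))
    (hdisc : 0 ≤ ‖b‖^2 * (A - B)^2 + 4 * (B^2 + (A * B - B^2) * b.re))
    (z : ℂ) (hz : z ∈ ball (0:ℂ) 1) (hz0 : z ≠ 0)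
    (hzr : ‖z‖ <
      2 / (‖b‖ * (A - B) +
        Real.sqrt (‖b‖^2 * (A - B)^2 + 4 * (B^2 + (A * B - B^2) * b.re)))) :
    0 < (z * deriv f z / f z).re := by
  have hz1 : ‖z‖ < 1 := mem_ball_zero_iff.1 hz
  have hωz : ‖ω z‖ ≤ ‖z‖ := norm_le_norm_of_mapsTo_ball hω.differentiableOn
    (fun x hx ↦ ball_subset_closedBall (mem_ball_zero_iff.2 (hωlt x hx))) hω0 hz1
  have hBz : |B| * ‖z‖ < 1 := by
    have : |B| ≤ 1 := abs_le.2 ⟨hB, by linarith⟩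
    nlinarith [norm_nonneg z]
  have hBω : 1 + (B : ℂ) * ω z ≠ 0 := one_add_ofReal_mul_ne_zero (lt_of_le_of_lt (by gcongr) hBz)
  rw [eq_one_add_mul_div_of_one_add_inv_mul_sub_one_eq hb hBω (hmem z hz hz0)]
  refine re_one_add_mul_div_one_add_mul_pos hBA hωz hBz ?_
  rw [← mul_pow] at hdisc hzr
  exact mul_sq_add_mul_lt_one (mul_pos (norm_pos_iff.2 hb) (sub_pos.2 hBA)) hdisc (norm_nonneg z) hzr

theorem stmt2 (A B : ℝ) (hB : -1 ≤ B) (hBA : B < A) (hA : A ≤ 1)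
    (b : ℂ) (hb : b ≠ 0) (f : ℂ → ℂ)
    (hf : AnalyticOn ℂ f (ball 0 1))
    (hf0 : f 0 = 0) (hf'0 : deriv f 0 = 1)
    (hfne : ∀ z ∈ ball (0:ℂ) 1, z ≠ 0 → f z ≠ 0)
    (ω : ℂ → ℂ) (hω : AnalyticOn ℂ ω (ball 0 1))
    (hω0 : ω 0 = 0) (hωlt : ∀ z ∈ ball (0:ℂ) 1, ‖ω z‖ < 1)
    (hmem : ∀ z ∈ ball (0:ℂ) 1, z ≠ 0 →
      1 + (1/b) * (z * deriv f z / f z - 1) = (1 + (A:ℂ) * ω z) / (1 + (B:ℂ) * ω z))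
    (hdisc : 0 ≤ ‖b‖^2 * (A - B)^2 + 4 * (B^2 + (A * B - B^2) * b.re))
    (z : ℂ) (hz : z ∈ ball (0:ℂ) 1) (hz0 : z ≠ 0)
    (hzr : ‖z‖ <
      2 / (‖b‖ * (A - B) +
        Real.sqrt (‖b‖^2 * (A - B)^2 + 4 * (B^2 + (A * B - B^2) * b.re)))) :
    0 < (z * deriv f z / f z).re :=
  stmt2_general A B hB hBA hA b hb f ω hω hω0 hωlt hmem hdisc z hz hz0 hzr
end

section
/- Let 0 < β < 1. If f belongs to S*(β,−β,b), then Re( z·f′(z)/f(z) ) > 0 for every z ∈ D \ {0} with |z| < 1/( β·( |b| + √( |b|² − 2·Re b + 1 ) ) ). (Theorem 2.1, special case A = β, B = −β.) -/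
/-!
Writing `W = β ω(z)`, the defining relation solves to `z f'(z)/f(z) = (1 + (2b - 1)W)/(1 - W)`,
whose real part has the sign of
`Re((1 + (2b - 1)W)(1 - W̄)) = 1 + Re(2(b - 1)W) - (2 Re b - 1)|W|²`.
With `c = |b|`, `d = |b - 1| = √(|b|² - 2 Re b + 1)` and `s = |W|`, this is at least
`1 - 2ds - (c² - d²)s² = (1 - (c + d)s)(1 + (c - d)s)`, which is positive as soon as
`(c + d)s < 1`. By the Schwarz lemma `s ≤ β|z|`, so the radius bound gives exactly this.
-/

open Complex ComplexConjugate Metric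

namespace Complex

lemma sqrt_norm_sq_sub_two_mul_re_add_one (b : ℂ) :
    √(‖b‖ ^ 2 - 2 * b.re + 1) = ‖b - 1‖ := by
  rw [← Real.sqrt_sq (norm_nonneg (b - 1))]
  congr 1
  simp only [Complex.sq_norm, normSq_apply, sub_re, sub_im, one_re, one_im]
  ring

lemma one_le_norm_add_norm_sub_one (b : ℂ) : 1 ≤ ‖b‖ + ‖b - 1‖ := by
  simpa using norm_sub_le b (b - 1)

lemma norm_lt_one_of_norm_mul_lt_one {b W : ℂ} (h : ‖W‖ * (‖b‖ + ‖b - 1‖) < 1) : ‖W‖ < 1 :=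
  lt_of_le_of_lt (le_mul_of_one_le_right (norm_nonneg W) (one_le_norm_add_norm_sub_one b)) h

lemma eq_div_one_sub_of_one_add_inv_mul_sub_one_eq {b p W : ℂ} (hb : b ≠ 0) (hW : W ≠ 1)
    (h : 1 + (1 / b) * (p - 1) = (1 + W) / (1 - W)) :
    p = (1 + (2 * b - 1) * W) / (1 - W) := by
  have hW' : 1 - W ≠ 0 := sub_ne_zero.2 hW.symm
  field_simp at h
  rw [eq_div_iff hW']
  linear_combination h

lemma re_div_pos_iff {u v : ℂ} (hv : v ≠ 0) : 0 < (u / v).re ↔ 0 < (u * conj v).re := by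
  rw [div_eq_mul_inv, inv_def, ← mul_assoc, re_mul_ofReal]
  exact mul_pos_iff_of_pos_right (inv_pos.2 (normSq_pos.2 hv))

lemma re_mul_conj_one_sub (b W : ℂ) :
    ((1 + (2 * b - 1) * W) * conj (1 - W)).re
      = 1 + (2 * (b - 1) * W).re - (2 * b.re - 1) * ‖W‖ ^ 2 := by
  simp only [Complex.sq_norm, normSq_apply, mul_re, mul_im, add_re, add_im, sub_re, sub_im, conj_re,
    conj_im, one_re, one_im, re_ofNat, im_ofNat]
  ring

lemma re_div_one_sub_pos {b W : ℂ} (h : ‖W‖ * (‖b‖ + ‖b - 1‖) < 1) :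
    0 < ((1 + (2 * b - 1) * W) / (1 - W)).re := by
  have hW : 1 - W ≠ 0 := fun h0 => by
    simpa [← sub_eq_zero.1 h0] using norm_lt_one_of_norm_mul_lt_one h
  rw [re_div_pos_iff hW, re_mul_conj_one_sub]
  set s := ‖W‖
  set c := ‖b‖
  set d := ‖b - 1‖
  have hs : 0 ≤ s := norm_nonneg W
  have hd : 0 ≤ d := norm_nonneg _
  have hcd : c ^ 2 - d ^ 2 = 2 * b.re - 1 := by
    simp only [c, d, Complex.sq_norm, normSq_apply, sub_re, sub_im, one_re, one_im]
    ring
  have hre : -(2 * d * s) ≤ (2 * (b - 1) * W).re := by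
    have := (abs_le.1 (abs_re_le_norm (2 * (b - 1) * W))).1
    rwa [norm_mul, norm_mul, Complex.norm_two] at this
  have hfactor : 0 < (1 - s * (c + d)) * (1 + (c - d) * s) := by
    apply mul_pos <;> nlinarith [norm_nonneg b]
  nlinarith

end Complex

theorem stmt11_general (β : ℝ) (hβ0 : 0 < β)
    (b : ℂ) (hb : b ≠ 0) (f : ℂ → ℂ)
    (ω : ℂ → ℂ) (hω : AnalyticOn ℂ ω (ball 0 1))
    (hω0 : ω 0 = 0) (hωlt : ∀ z ∈ ball (0:ℂ) 1, ‖ω z‖ < 1)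
    (hmem : ∀ z ∈ ball (0:ℂ) 1, z ≠ 0 →
      1 + (1/b) * (z * deriv f z / f z - 1) = (1 + (β:ℂ) * ω z) / (1 - (β:ℂ) * ω z))
    (z : ℂ) (hz : z ∈ ball (0:ℂ) 1) (hz0 : z ≠ 0)
    (hzr : ‖z‖ <
      1 / (β * (‖b‖ + Real.sqrt ((‖b‖)^2 - 2 * b.re + 1)))) :
    0 < (z * deriv f z / f z).re := by
  rw [sqrt_norm_sq_sub_two_mul_re_add_one] at hzr
  have hschwarz : ‖ω z‖ ≤ ‖z‖ :=
    norm_le_norm_of_mapsTo_ball hω.differentiableOn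
      (fun x hx => mem_closedBall_zero_iff.2 (hωlt x hx).le) hω0 (mem_ball_zero_iff.1 hz)
  have hsmall : ‖(β : ℂ) * ω z‖ * (‖b‖ + ‖b - 1‖) < 1 := by
    have hpos : 0 < β * (‖b‖ + ‖b - 1‖) :=
      mul_pos hβ0 (one_pos.trans_le (one_le_norm_add_norm_sub_one b))
    rw [lt_div_iff₀ hpos] at hzr
    rw [norm_mul, norm_real, Real.norm_of_nonneg hβ0.le]
    calc β * ‖ω z‖ * (‖b‖ + ‖b - 1‖) ≤ ‖z‖ * (β * (‖b‖ + ‖b - 1‖)) := by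
          rw [mul_comm β, mul_assoc]; gcongr
      _ < 1 := hzr
  have hW1 : (β : ℂ) * ω z ≠ 1 := fun h => by
    simpa [h] using norm_lt_one_of_norm_mul_lt_one hsmall
  rw [eq_div_one_sub_of_one_add_inv_mul_sub_one_eq hb hW1 (hmem z hz hz0)]
  exact re_div_one_sub_pos hsmall

theorem stmt11 (β : ℝ) (hβ0 : 0 < β) (hβ1 : β < 1)
    (b : ℂ) (hb : b ≠ 0) (f : ℂ → ℂ)
    (hf : AnalyticOn ℂ f (ball 0 1))
    (hf0 : f 0 = 0) (hf'0 : deriv f 0 = 1)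
    (hfne : ∀ z ∈ ball (0:ℂ) 1, z ≠ 0 → f z ≠ 0)
    (ω : ℂ → ℂ) (hω : AnalyticOn ℂ ω (ball 0 1))
    (hω0 : ω 0 = 0) (hωlt : ∀ z ∈ ball (0:ℂ) 1, ‖ω z‖ < 1)
    (hmem : ∀ z ∈ ball (0:ℂ) 1, z ≠ 0 →
      1 + (1/b) * (z * deriv f z / f z - 1) = (1 + (β:ℂ) * ω z) / (1 - (β:ℂ) * ω z))
    (z : ℂ) (hz : z ∈ ball (0:ℂ) 1) (hz0 : z ≠ 0)
    (hzr : ‖z‖ <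
      1 / (β * (‖b‖ + Real.sqrt ((‖b‖)^2 - 2 * b.re + 1)))) :
    0 < (z * deriv f z / f z).re :=
  stmt11_general β hβ0 b hb f ω hω hω0 hωlt hmem z hz hz0 hzr
end
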